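/- Let M be a symmetric D×D real matrix, decomposed as M = M₊ + M₋ where M₊ is the projection of M onto its strictly positive eigenspace and M₋ onto its strictly negative eigenspace. Then for any W ∈ ℝ^{D×K} whose column span is contained in the non-negative eigenspace of M, ‖M − WWᵀ‖_F² = ‖M₊ − WWᵀ‖_F² + ‖M₋‖_F². -/
import Mathlib


open Matrix

/-- Squared Frobenius norm of a real matrix. -/
def frobSq {m n : Type*} [Fintype m] [Fintype n] (M : Matrix m n ℝ) : ℝ :=
  ∑ i, ∑ j, (M i j) ^ 2

lemma frobSq_eq_trace {m n : Type*} [Fintype m] [Fintype n] (M : Matrix m n ℝ) :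
    frobSq M = (Mᵀ * M).trace := by
  simp only [frobSq, Matrix.trace, Matrix.diag, Matrix.mul_apply, Matrix.transpose_apply, sq]
  exact Finset.sum_comm

theorem stmt_3 {D K : ℕ} (M V : Matrix (Fin D) (Fin D) ℝ) (hM : M.IsSymm)
    (hV : Vᵀ * V = 1) (eig : Fin D → ℝ)
    (hdecomp : M = V * Matrix.diagonal eig * Vᵀ)
    (Mplus Mminus : Matrix (Fin D) (Fin D) ℝ)
    (hplus : Mplus = V * Matrix.diagonal (fun i => max (eig i) 0) * Vᵀ)
    (hminus : Mminus = V * Matrix.diagonal (fun i => min (eig i) 0) * Vᵀ)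
    (W : Matrix (Fin D) (Fin K) ℝ)
    (hW : (V * Matrix.diagonal (fun i => if eig i < 0 then (1 : ℝ) else 0) * Vᵀ) * W = 0) :
    frobSq (M - W * Wᵀ) = frobSq (Mplus - W * Wᵀ) + frobSq Mminus := by
  have hmul : ∀ d e : Fin D → ℝ,
      (V * Matrix.diagonal d * Vᵀ) * (V * Matrix.diagonal e * Vᵀ)
        = V * Matrix.diagonal (fun i => d i * e i) * Vᵀ := by
    intro d e
    have h1 : Vᵀ * (V * Matrix.diagonal e * Vᵀ) = Matrix.diagonal e * Vᵀ := by
      rw [← Matrix.mul_assoc, ← Matrix.mul_assoc, hV, Matrix.one_mul]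
    rw [Matrix.mul_assoc (V * Matrix.diagonal d) Vᵀ, h1,
      ← Matrix.mul_assoc (V * Matrix.diagonal d) (Matrix.diagonal e) Vᵀ,
      Matrix.mul_assoc V (Matrix.diagonal d) (Matrix.diagonal e),
      Matrix.diagonal_mul_diagonal]
  -- Mminus * W = 0
  have hMmP : Mminus * (V * Matrix.diagonal (fun i => if eig i < 0 then (1 : ℝ) else 0) * Vᵀ)
      = Mminus := by
    rw [hminus, hmul]
    have heq : (fun i => min (eig i) 0 * if eig i < 0 then (1 : ℝ) else 0)
        = fun i => min (eig i) 0 := by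
      funext i
      by_cases h : eig i < 0
      · simp [h]
      · simp [h, min_eq_right (not_lt.mp h)]
    rw [heq]
  have hMW : Mminus * W = 0 := by
    rw [← hMmP, Matrix.mul_assoc, hW, Matrix.mul_zero]
  -- Mplus * Mminus = 0
  have hPM : Mplus * Mminus = 0 := by
    rw [hplus, hminus, hmul]
    have : (fun i => max (eig i) 0 * min (eig i) 0) = fun _ => (0 : ℝ) := by
      ext i
      rcases le_or_gt (eig i) 0 with h | h
      · rw [max_eq_right h, zero_mul]
      · rw [min_eq_right (le_of_lt h), mul_zero]
    rw [this]
    simp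
  -- symmetry of Mplus and Mminus
  have hPsymm : Mplusᵀ = Mplus := by
    rw [hplus]
    simp [Matrix.transpose_mul, Matrix.diagonal_transpose, Matrix.mul_assoc]
  have hMsymm : Mminusᵀ = Mminus := by
    rw [hminus]
    simp [Matrix.transpose_mul, Matrix.diagonal_transpose, Matrix.mul_assoc]
  -- M = Mplus + Mminus
  have hsum : M = Mplus + Mminus := by
    rw [hdecomp, hplus, hminus, ← Matrix.add_mul, ← Matrix.mul_add, Matrix.diagonal_add]
    have : (fun i => max (eig i) 0 + min (eig i) 0) = eig :=
      funext fun i => by rw [max_add_min, add_zero]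
    rw [this]
  set A := Mplus - W * Wᵀ with hA
  have hsplit : M - W * Wᵀ = A + Mminus := by rw [hsum, hA]; abel
  -- cross term vanishes
  have hcross : (Aᵀ * Mminus).trace = 0 := by
    rw [hA, Matrix.transpose_sub, Matrix.sub_mul, Matrix.trace_sub, hPsymm, hPM,
      Matrix.trace_zero, Matrix.transpose_mul, Matrix.transpose_transpose, zero_sub,
      Matrix.mul_assoc, Matrix.trace_mul_comm, Matrix.mul_assoc, hMW, Matrix.mul_zero,
      Matrix.trace_zero, neg_zero]
  have hcross' : (Mminusᵀ * A).trace = 0 := by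
    rw [← Matrix.trace_transpose, Matrix.transpose_mul, Matrix.transpose_transpose, hcross]
  rw [hsplit, frobSq_eq_trace, frobSq_eq_trace, frobSq_eq_trace, Matrix.transpose_add,
    Matrix.add_mul, Matrix.mul_add, Matrix.mul_add, Matrix.trace_add, Matrix.trace_add,
    Matrix.trace_add, hcross, hcross']
  ring
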